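/- arXiv:1606.04461 — 2 statements merged into one kernel-verified Lean document; each statement's English description precedes it below -/
import Mathlib

section
/- Let n ≥ 3 and k ≥ 3 be integers with n odd, and let C_n be the cycle graph on n vertices. Then Σ_k(C_n) = ℤ_k \ {0} if k is odd, and Σ_k(C_n) = {0, 2, 4, …, k−2} (the set of c ∈ ℤ_k with c = 2m for some m ∈ ℤ_k) if k is even; in particular, C_n is not completely k-magic. -/
open Classical in
/-- The sum of the labels `ℓ s(v,u)` over all neighbors `u` of `v` in `G`. -/
noncomputable def vertexLabelSum {V : Type*} [Fintype V] (G : SimpleGraph V)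
    {M : Type*} [AddCommMonoid M] (ℓ : Sym2 V → M) (v : V) : M :=
  ∑ u ∈ Finset.univ.filter (fun u => G.Adj v u), ℓ s(v, u)

/-- `ℓ` is a `c`-sum `k`-magic labeling of `G`: it is nonzero on every edge of `G`
and the labels around every vertex sum to `c` in `ZMod k`. -/
def IsMagicLabeling {V : Type*} [Fintype V] (G : SimpleGraph V) (k : ℕ) (c : ZMod k)
    (ℓ : Sym2 V → ZMod k) : Prop :=
  (∀ e ∈ G.edgeSet, ℓ e ≠ 0) ∧ ∀ v : V, vertexLabelSum G ℓ v = c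

/-- `G` is `c`-sum `k`-magic. -/
def IsSumMagic {V : Type*} [Fintype V] (G : SimpleGraph V) (k : ℕ) (c : ZMod k) : Prop :=
  ∃ ℓ : Sym2 V → ZMod k, IsMagicLabeling G k c ℓ

/-- `G` is completely `k`-magic: `c`-sum `k`-magic for every `c ∈ ZMod k`. -/
def CompletelyMagic {V : Type*} [Fintype V] (G : SimpleGraph V) (k : ℕ) : Prop :=
  ∀ c : ZMod k, IsSumMagic G k c

/-- The sum spectrum of `G` with respect to `k`. -/
def sumSpectrum {V : Type*} [Fintype V] (G : SimpleGraph V) (k : ℕ) : Set (ZMod k) :=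
  {c : ZMod k | IsSumMagic G k c}

open Classical in
/-- Degree of a vertex (classical, to avoid decidability assumptions). -/
noncomputable def degreeOf {V : Type*} [Fintype V] (G : SimpleGraph V) (v : V) : ℕ :=
  (Finset.univ.filter (fun u => G.Adj v u)).card

/-- `G` is `r`-regular. -/
def IsRegularDeg {V : Type*} [Fintype V] (G : SimpleGraph V) (r : ℕ) : Prop :=
  ∀ v : V, degreeOf G v = r


/-!
On a cycle, the conditions at two consecutive vertices force edges two steps apart to carry the
same label; as `n` is odd, stepping by two reaches every edge, so a `c`-sum labeling is constant
with some value `x ≠ 0` and `2 * x = c`. The spectrum is thus the image of the nonzero residues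
under doubling: every nonzero residue when `2` is a unit (`k` odd), and every even residue when
`k` is even, since `0 = 2 * (k / 2)`. Odd `k` misses `0` and even `k` misses `1`.
-/

open SimpleGraph Finset

lemma vertexLabelSum_eq_sum_neighborFinset {V : Type*} [Fintype V] (G : SimpleGraph V)
    [DecidableRel G.Adj] {M : Type*} [AddCommMonoid M] (ℓ : Sym2 V → M) (v : V) :
    vertexLabelSum G ℓ v = ∑ u ∈ G.neighborFinset v, ℓ s(v, u) := by
  rw [vertexLabelSum, neighborFinset_eq_filter]
  congr

open Fin.CommRing in
lemma vertexLabelSum_cycleGraph {n : ℕ} {M : Type*} [AddCommMonoid M]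
    (ℓ : Sym2 (Fin (n + 3)) → M) (v : Fin (n + 3)) :
    vertexLabelSum (cycleGraph (n + 3)) ℓ v = ℓ s(v, v - 1) + ℓ s(v, v + 1) := by
  have hne : v - 1 ≠ v + 1 := by
    rw [Ne, sub_eq_iff_eq_add, add_assoc, left_eq_add, one_add_one_eq_two]
    simp [Fin.ext_iff, Nat.mod_eq_of_lt (show 2 < n + 3 by omega)]
  rw [vertexLabelSum_eq_sum_neighborFinset, cycleGraph_neighborFinset, sum_pair hne]

open Fin.CommRing in
lemma Fin.periodic_one_of_add_succ_eq {n : ℕ} [NeZero n] (hn : Odd n) {M : Type*}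
    [AddCommGroup M] {f : Fin n → M} {c : M} (hf : ∀ v, f v + f (v + 1) = c) :
    Function.Periodic f 1 := by
  have h2 : Function.Periodic f 2 := fun v => by
    rw [← one_add_one_eq_two, ← add_assoc]
    exact add_left_cancel ((hf (v + 1)).trans ((hf v).symm.trans (add_comm _ _)))
  obtain ⟨t, rfl⟩ := hn
  have hinv : ((t : Fin (2 * t + 1)) + 1) * 2 = 1 := by
    have := Fin.natCast_self (2 * t + 1)
    push_cast at this
    linear_combination this
  simpa only [Nat.cast_add, Nat.cast_one, hinv] using h2.nat_mul (t + 1)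

open Fin.CommRing in
lemma sumSpectrum_cycleGraph {n : ℕ} (hn : Odd (n + 3)) (k : ℕ) :
    sumSpectrum (cycleGraph (n + 3)) k = (2 * ·) '' {x | x ≠ 0} := by
  ext c
  constructor
  · rintro ⟨ℓ, hne, hsum⟩
    have hadj (v : Fin (n + 3)) : (cycleGraph (n + 3)).Adj v (v + 1) :=
      cycleGraph_adj.2 (Or.inr (add_sub_cancel_left v 1))
    have hf (v : Fin (n + 3)) : ℓ s(v, v + 1) + ℓ s(v + 1, v + 1 + 1) = c := by
      have := hsum (v + 1)
      rwa [vertexLabelSum_cycleGraph, add_sub_cancel_right, Sym2.eq_swap] at this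
    have hconst := Fin.periodic_one_of_add_succ_eq hn (f := fun v => ℓ s(v, v + 1)) hf 0
    refine ⟨ℓ s(0, 0 + 1), hne _ (hadj 0), ?_⟩
    simpa only [two_mul, hconst] using hf 0
  · rintro ⟨x, hx, rfl⟩
    exact ⟨fun _ => x, fun _ _ => hx,
      fun v => (vertexLabelSum_cycleGraph _ v).trans (two_mul x).symm⟩

lemma IsUnit.image_mul_left_setOf_ne_zero {M₀ : Type*} [MonoidWithZero M₀] {a : M₀}
    (ha : IsUnit a) : (a * ·) '' {x | x ≠ 0} = {x | x ≠ 0} := by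
  ext c
  refine ⟨?_, fun hc => ⟨ha.unit⁻¹ * c, ?_, ?_⟩⟩
  · rintro ⟨x, hx, rfl⟩
    exact (ha.mul_right_eq_zero).not.2 hx
  · exact fun h => hc (by simpa [h] using (ha.unit.mul_inv_cancel_left c).symm)
  · exact ha.unit.mul_inv_cancel_left c

lemma image_mul_left_setOf_ne_zero_of_mul_eq_zero {M₀ : Type*} [MulZeroClass M₀] {a z : M₀}
    (hz : z ≠ 0) (haz : a * z = 0) : (a * ·) '' {x | x ≠ 0} = {c | ∃ m, c = a * m} := by
  ext c
  refine ⟨fun ⟨x, _, hx⟩ => ⟨x, hx.symm⟩, ?_⟩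
  rintro ⟨m, rfl⟩
  by_cases hm : m = 0
  · exact ⟨z, hz, by simp [haz, hm]⟩
  · exact ⟨m, hm, rfl⟩

lemma ZMod.isUnit_two_of_odd {k : ℕ} (hk : Odd k) : IsUnit (2 : ZMod k) := by
  simpa using (ZMod.isUnit_iff_coprime 2 k).2 (Nat.coprime_two_left.2 hk)

lemma ZMod.exists_ne_zero_two_mul_eq_zero {k : ℕ} (hk : Even k) (hk0 : k ≠ 0) :
    ∃ x : ZMod k, x ≠ 0 ∧ 2 * x = 0 := by
  obtain ⟨t, rfl⟩ := hk
  refine ⟨t, ?_, ?_⟩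
  · rw [Ne, ZMod.natCast_eq_zero_iff]
    exact fun h => absurd (Nat.le_of_dvd (by omega) h) (by omega)
  · rw [two_mul, ← Nat.cast_add, ZMod.natCast_self]

lemma ZMod.one_ne_two_mul_of_even {k : ℕ} (hk : Even k) (m : ZMod k) : 1 ≠ 2 * m := by
  intro h
  have := congrArg (ZMod.castHom hk.two_dvd (ZMod 2)) h
  rw [map_one, map_mul, map_ofNat, show (2 : ZMod 2) = 0 from rfl, zero_mul] at this
  exact one_ne_zero this

/-- For odd `n ≥ 3` and `k ≥ 3`, the sum spectrum of `C_n` is the nonzero residues when `k`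
is odd and the even residues when `k` is even; in particular `C_n` is not completely
`k`-magic. -/
theorem odd_cycle_spectrum (n k : ℕ) (hn : 3 ≤ n) (hnodd : Odd n) (hk : 3 ≤ k) :
    (Odd k → sumSpectrum (SimpleGraph.cycleGraph n) k = {c : ZMod k | c ≠ 0}) ∧
    (Even k → sumSpectrum (SimpleGraph.cycleGraph n) k
      = {c : ZMod k | ∃ m : ZMod k, c = 2 * m}) ∧
    ¬ CompletelyMagic (SimpleGraph.cycleGraph n) k := by
  obtain ⟨n, rfl⟩ : ∃ m, n = m + 3 := ⟨n - 3, by omega⟩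
  have hspec := sumSpectrum_cycleGraph hnodd k
  have hodd (hkodd : Odd k) : sumSpectrum (cycleGraph (n + 3)) k = {c | c ≠ 0} :=
    hspec.trans (ZMod.isUnit_two_of_odd hkodd).image_mul_left_setOf_ne_zero
  have heven (hkeven : Even k) : sumSpectrum (cycleGraph (n + 3)) k = {c | ∃ m, c = 2 * m} := by
    obtain ⟨z, hz, h2z⟩ := ZMod.exists_ne_zero_two_mul_eq_zero hkeven (by omega)
    exact hspec.trans (image_mul_left_setOf_ne_zero_of_mul_eq_zero hz h2z)
  refine ⟨hodd, heven, fun hmagic => ?_⟩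
  rcases Nat.even_or_odd k with hkeven | hkodd
  · have h1 : (1 : ZMod k) ∈ sumSpectrum (cycleGraph (n + 3)) k := hmagic 1
    rw [heven hkeven] at h1
    obtain ⟨m, hm⟩ := h1
    exact ZMod.one_ne_two_mul_of_even hkeven m hm
  · have h0 : (0 : ZMod k) ∈ sumSpectrum (cycleGraph (n + 3)) k := hmagic 0
    rw [hodd hkodd] at h0
    exact h0 rfl
end

section
/- Let k ≥ 3 and r ≥ 3 be integers with gcd(r, k) = 1, and let G be an r-regular finite simple graph. Then every nonzero element of ℤ_k belongs to the sum spectrum of G, i.e., ℤ_k \ {0} ⊆ Σ_k(G). -/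
/-! Label every edge with the same nonzero residue `a`: on an `r`-regular graph every vertex sum
is then `r • a`, and when `r` is invertible modulo `k` every nonzero `c` arises this way, from
`a = r⁻¹ c`. -/

theorem vertexLabelSum_const {V : Type*} [Fintype V] (G : SimpleGraph V) {M : Type*}
    [AddCommMonoid M] (a : M) (v : V) :
    vertexLabelSum G (fun _ => a) v = degreeOf G v • a := by
  rw [vertexLabelSum, Finset.sum_const, degreeOf]

theorem IsRegularDeg.isSumMagic_nsmul {V : Type*} [Fintype V] {G : SimpleGraph V} {r k : ℕ}
    (hreg : IsRegularDeg G r) {a : ZMod k} (ha : a ≠ 0) : IsSumMagic G k (r • a) :=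
  ⟨fun _ => a, fun _ _ => ha, fun v => by rw [vertexLabelSum_const, hreg v]⟩

theorem nonzero_spectrum_of_coprime_general {V : Type*} [Fintype V] (G : SimpleGraph V)
    (r k : ℕ) (hcop : Nat.gcd r k = 1)
    (hreg : IsRegularDeg G r) :
    {c : ZMod k | c ≠ 0} ⊆ sumSpectrum G k := by
  intro c (hc : c ≠ 0)
  let u : (ZMod k)ˣ := ZMod.unitOfCoprime r hcop
  have hc_eq : r • ((u⁻¹ : (ZMod k)ˣ) * c) = c := by
    rw [nsmul_eq_mul, ← ZMod.coe_unitOfCoprime r hcop, ← mul_assoc, Units.mul_inv, one_mul]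
  rw [← hc_eq]
  exact hreg.isSumMagic_nsmul ((Units.mul_right_eq_zero _).not.mpr hc)

/-- If `gcd(r, k) = 1` with `k, r ≥ 3`, then every nonzero residue is a magic sum of any
`r`-regular graph. -/
theorem nonzero_spectrum_of_coprime {V : Type*} [Fintype V] (G : SimpleGraph V)
    (r k : ℕ) (hr : 3 ≤ r) (hk : 3 ≤ k) (hcop : Nat.gcd r k = 1)
    (hreg : IsRegularDeg G r) :
    {c : ZMod k | c ≠ 0} ⊆ sumSpectrum G k :=
  nonzero_spectrum_of_coprime_general G r k hcop hreg
end
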